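/- Suppose N_n = (1/9)(d1·10^{m1+m2} − (d1−d2)·10^{m2} − d2) with 1 ≤ d1 ≤ 9, 0 ≤ d2 ≤ 9, m1 ≥ m2 ≥ 1, and n > 250. Then |9a·α^n − (d1·10^{m1} − (d1−d2))·10^{m2}| < 18. -/

import Mathlib

/-!
The error `E n = N n - a α ^ n` solves the Narayana recurrence and, for this choice of `a`, has
no component along `α ^ n`; so it solves the recurrence of the quadratic factor, whose roots are
complex conjugates of modulus `α ^ (-1/2) < 1`. The norm form of that recurrence is positive
definite and decays geometrically, which gives `|E n| < 1`. The repdigit equation says that the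
target is `9 N n + d2`, hence it lies within `9 + 9` of `9 a α ^ n`.
-/

def narayana : ℕ → ℕ
  | 0 => 0
  | 1 => 1
  | 2 => 1
  | n + 3 => narayana (n + 2) + narayana n

/-- If `β, γ` are the roots of `X ^ 2 - s X + p`, this is the norm `(y - β x) (y - γ x)`;
along a solution of `x (k + 2) = s x (k + 1) - p x k` it is multiplied by `p = β γ` at each step. -/
def recurrenceNorm {R : Type*} [CommRing R] (s p x y : R) : R :=
  y ^ 2 - s * x * y + p * x ^ 2

section SecondOrderRecurrence

variable {R : Type*} [CommRing R] {s p : R} {x : ℕ → R}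

theorem recurrenceNorm_succ (hx : ∀ k, x (k + 2) = s * x (k + 1) - p * x k) (k : ℕ) :
    recurrenceNorm s p (x (k + 1)) (x (k + 2)) = p * recurrenceNorm s p (x k) (x (k + 1)) := by
  simp only [recurrenceNorm, hx k]
  ring

theorem recurrenceNorm_eq_pow_mul (hx : ∀ k, x (k + 2) = s * x (k + 1) - p * x k) (k : ℕ) :
    recurrenceNorm s p (x k) (x (k + 1)) = p ^ k * recurrenceNorm s p (x 0) (x 1) := by
  induction k with
  | zero => ring
  | succ k ih => rw [recurrenceNorm_succ hx, ih, pow_succ']; ring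

end SecondOrderRecurrence

section OrderedField

variable {K : Type*} [Field K] [LinearOrder K] [IsStrictOrderedRing K]

theorem mul_sq_le_recurrenceNorm (s p x y : K) :
    (p - s ^ 2 / 4) * x ^ 2 ≤ recurrenceNorm s p x y := by
  have hsquare : recurrenceNorm s p x y = (y - s / 2 * x) ^ 2 + (p - s ^ 2 / 4) * x ^ 2 := by
    unfold recurrenceNorm
    ring
  rw [hsquare]
  exact le_add_of_nonneg_left (sq_nonneg _)

/-- With complex roots of modulus at most one, solutions stay bounded by their initial norm. -/
theorem mul_sq_le_recurrenceNorm_zero {s p : K} {x : ℕ → K} (hdisc : s ^ 2 < 4 * p) (hp : p ≤ 1)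
    (hx : ∀ k, x (k + 2) = s * x (k + 1) - p * x k) (k : ℕ) :
    (p - s ^ 2 / 4) * x k ^ 2 ≤ recurrenceNorm s p (x 0) (x 1) := by
  have hp0 : 0 ≤ p := by nlinarith [sq_nonneg s]
  have hnorm0 : 0 ≤ recurrenceNorm s p (x 0) (x 1) :=
    (mul_nonneg (by linarith) (sq_nonneg _)).trans (mul_sq_le_recurrenceNorm s p _ _)
  calc (p - s ^ 2 / 4) * x k ^ 2
      ≤ recurrenceNorm s p (x k) (x (k + 1)) := mul_sq_le_recurrenceNorm s p _ _
    _ = p ^ k * recurrenceNorm s p (x 0) (x 1) := recurrenceNorm_eq_pow_mul hx k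
    _ ≤ recurrenceNorm s p (x 0) (x 1) :=
        mul_le_of_le_one_left hnorm0 (pow_le_one₀ hp0 hp)

end OrderedField

/-- `X ^ 3 - X ^ 2 - 1 = (X - α) (X ^ 2 - (1 - α) X + (α ^ 2 - α))`. -/
theorem narayana_recurrence_second_order {R : Type*} [CommRing R] {α : R} (hα : α ^ 3 = α ^ 2 + 1)
    {x : ℕ → R} (hx : ∀ k, x (k + 3) = x (k + 2) + x k)
    (hx₀ : x 2 = (1 - α) * x 1 - (α ^ 2 - α) * x 0) (k : ℕ) :
    x (k + 2) = (1 - α) * x (k + 1) - (α ^ 2 - α) * x k := by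
  induction k with
  | zero => exact hx₀
  | succ k ih => rw [hx k]; linear_combination α * ih - x k * hα

theorem narayana_root_bounds {α : ℝ} (hα : α ^ 3 = α ^ 2 + 1) : 1.46 < α ∧ α < 1.47 := by
  constructor
  · nlinarith [sq_nonneg (α - 1.46), sq_nonneg (α + 1), sq_nonneg α, sq_nonneg (α - 1)]
  · nlinarith [sq_nonneg (α - 1.47), sq_nonneg (α + 1), sq_nonneg α]

theorem abs_narayana_sub_lt_one {α : ℝ} (hα : α ^ 3 = α ^ 2 + 1)
    {a : ℝ} (ha : a = α ^ 2 / (α ^ 3 + 2)) (n : ℕ) :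
    |(narayana n : ℝ) - a * α ^ n| < 1 := by
  obtain ⟨hα_lo, hα_hi⟩ := narayana_root_bounds hα
  have ha' : a * (3 * α - 2) = 1 := by
    rw [ha, div_mul_eq_mul_div, div_eq_one_iff_eq (by positivity)]
    linear_combination 2 * hα
  have ha_lo : 0.41 < a := by nlinarith
  have ha_hi : a < 0.42 := by nlinarith
  set E : ℕ → ℝ := fun k => (narayana k : ℝ) - a * α ^ k with hE
  have hE₃ : ∀ k, E (k + 3) = E (k + 2) + E k := by
    intro k
    simp only [hE, narayana, Nat.cast_add]
    linear_combination -a * α ^ k * hα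
  -- `a = 1 / (3α - 2)` is exactly the coefficient that removes the `α ^ k` component from `E`.
  have hE₀ : E 2 = (1 - α) * E 1 - (α ^ 2 - α) * E 0 := by
    simp only [hE, narayana, Nat.cast_one, Nat.cast_zero]
    linear_combination -α * ha'
  have hbound := mul_sq_le_recurrenceNorm_zero (by nlinarith) (by nlinarith)
    (narayana_recurrence_second_order hα hE₃ hE₀) n
  have hnorm : recurrenceNorm (1 - α) (α ^ 2 - α) (E 0) (E 1) < α ^ 2 - α - (1 - α) ^ 2 / 4 := by
    simp only [recurrenceNorm, hE, narayana, Nat.cast_one, Nat.cast_zero]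
    nlinarith [mul_pos (sub_pos.2 ha_lo) (sub_pos.2 hα_lo)]
  rw [← sq_lt_one_iff_abs_lt_one]
  nlinarith

theorem second_estimate_general (α : ℝ) (hα : α ^ 3 = α ^ 2 + 1)
    (a : ℝ) (ha : a = α ^ 2 / (α ^ 3 + 2))
    (n d1 d2 m1 m2 : ℕ) (hd2 : d2 ≤ 9)
    (heq : 9 * (narayana n : ℝ) =
      (d1 : ℝ) * 10 ^ (m1 + m2) - ((d1 : ℝ) - (d2 : ℝ)) * 10 ^ m2 - (d2 : ℝ)) :
    |9 * a * α ^ n - ((d1 : ℝ) * 10 ^ m1 - ((d1 : ℝ) - (d2 : ℝ))) * 10 ^ m2| < 18 := by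
  have hrepdigit : ((d1 : ℝ) * 10 ^ m1 - ((d1 : ℝ) - (d2 : ℝ))) * 10 ^ m2 =
      9 * (narayana n : ℝ) + d2 := by
    rw [heq, pow_add]
    ring
  have hd2' : (d2 : ℝ) ≤ 9 := by exact_mod_cast hd2
  have happrox := abs_lt.1 (abs_narayana_sub_lt_one hα ha n)
  rw [hrepdigit, abs_lt]
  constructor <;> linarith [happrox.1, happrox.2, (Nat.cast_nonneg d2 : (0 : ℝ) ≤ d2)]

/-- Second key estimate: `|9 a α^n - (d1 10^(m1) - (d1 - d2)) 10^(m2)| < 18`. -/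
theorem second_estimate (α : ℝ) (hα : α ^ 3 = α ^ 2 + 1)
    (a : ℝ) (ha : a = α ^ 2 / (α ^ 3 + 2))
    (n d1 d2 m1 m2 : ℕ) (hn : 250 < n)
    (hd1 : 1 ≤ d1) (hd1' : d1 ≤ 9) (hd2 : d2 ≤ 9) (hm : m2 ≤ m1) (hm2 : 1 ≤ m2)
    (heq : 9 * (narayana n : ℝ) =
      (d1 : ℝ) * 10 ^ (m1 + m2) - ((d1 : ℝ) - (d2 : ℝ)) * 10 ^ m2 - (d2 : ℝ)) :
    |9 * a * α ^ n - ((d1 : ℝ) * 10 ^ m1 - ((d1 : ℝ) - (d2 : ℝ))) * 10 ^ m2| < 18 :=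
  second_estimate_general α hα a ha n d1 d2 m1 m2 hd2 heq
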